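/- Let ζ ≥ 0, let μ and ν be finite ζ-comparable measures on a measurable space X, let W ⊆ X be a measurable set with μ(W) > 0 and ν(W) > 0, and let f be of scaling type σ with f(x) > 0 for all x > 0. Let A, B, C : X × X → Set X be families of measurable subsets of X such that the functions (p,q) ↦ α_μ(A(p,q), B(p,q)), (p,q) ↦ α_ν(B(p,q), C(p,q)) and (p,q) ↦ α_μ(A(p,q), C(p,q)) are measurable with respect to the product σ-algebra on X × X. Then (1/f(μ(W))) · ∫_{W×W} α_μ(A(p,q), C(p,q)) d(μ⊗μ)(p,q) ≤ 2 · (1/f(μ(W))) · ∫_{W×W} α_μ(A(p,q), B(p,q)) d(μ⊗μ)(p,q) + 2·exp((4+σ)·ζ) · (1/f(ν(W))) · ∫_{W×W} α_ν(B(p,q), C(p,q)) d(ν⊗ν)(p,q). -/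

import Mathlib

open MeasureTheory Real

open Classical in
/-- The discrepancy `α_μ(A,B) = μ(A △ B)/μ(A ∪ B)` when `0 < μ(A ∪ B) < ∞`, and `0`
otherwise. -/
noncomputable def disc {X : Type*} [MeasurableSpace X] (μ : Measure X) (A B : Set X) : ℝ :=
  if 0 < μ (A ∪ B) ∧ μ (A ∪ B) < ⊤ then (μ (symmDiff A B)).toReal / (μ (A ∪ B)).toReal else 0

/-- Two measures are `ζ`-comparable if each is bounded by `exp ζ` times the other on all
measurable sets. -/
def Comparable {X : Type*} [MeasurableSpace X] (ζ : ℝ) (μ ν : Measure X) : Prop :=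
  ∀ S : Set X, MeasurableSet S →
    μ S ≤ ENNReal.ofReal (Real.exp ζ) * ν S ∧ ν S ≤ ENNReal.ofReal (Real.exp ζ) * μ S

/-- `f` is of scaling type `σ`: nonnegative and monotone nondecreasing on `[0,∞)`, with
`f (a·x) ≤ a^σ · f x` for all `a ≥ 1` and `x ≥ 0`. -/
def ScalingType (f : ℝ → ℝ) (σ : ℝ) : Prop :=
  (∀ x ≥ (0 : ℝ), 0 ≤ f x) ∧ MonotoneOn f (Set.Ici 0) ∧
    ∀ a ≥ (1 : ℝ), ∀ x ≥ (0 : ℝ), f (a * x) ≤ a ^ σ * f x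

/-!
The discrepancy `disc μ A B = μ(A △ B) / μ(A ∪ B)` satisfies the quasi-triangle inequality
`disc μ A C ≤ 2 disc μ A B + 2 disc μ B C`, since `A △ C ⊆ (A △ B) ∪ (B △ C)` and, unless one
of the two ratios on the right exceeds `1/2`, the unions `A ∪ B` and `B ∪ C` have at most twice
the measure of `A ∪ C`. Replacing `μ` by the `ζ`-comparable `ν` costs a factor `e^{2ζ}` in the
discrepancy, another `e^{2ζ}` in integrals against the product measure, and `e^{σζ}` in the
normalisation `1 / f(μ W)`, by the scaling property of `f`.
-/

section

variable {X : Type*} [MeasurableSpace X]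

/-- Both degenerate cases of `disc` are exactly the cases `μ.real (A ∪ B) = 0`, where real
division returns `0` as well. -/
theorem disc_eq_measureReal_div (μ : Measure X) (A B : Set X) :
    disc μ A B = μ.real (symmDiff A B) / μ.real (A ∪ B) := by
  unfold disc
  split_ifs with h
  · rfl
  · rw [not_and_or, not_lt, not_lt, nonpos_iff_eq_zero, top_le_iff] at h
    rcases h with h | h <;> simp [Measure.real, h]

theorem disc_nonneg (μ : Measure X) (A B : Set X) : 0 ≤ disc μ A B := by
  rw [disc_eq_measureReal_div]
  positivity

theorem disc_le_one (μ : Measure X) (A B : Set X) : disc μ A B ≤ 1 := by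
  unfold disc
  split_ifs with h
  · exact div_le_one_of_le₀ (ENNReal.toReal_mono h.2.ne (measure_mono Set.symmDiff_subset_union))
      ENNReal.toReal_nonneg
  · exact zero_le_one

/-- If some `dᵢ / Eᵢ` is at least `1 / 2` the right side is at least `1 ≥ x / D`; otherwise
the hypotheses force `E₁, E₂ ≤ 2 * D`. -/
theorem div_le_two_mul_div_add_two_mul_div {x D d₁ d₂ E₁ E₂ : ℝ} (hx : 0 ≤ x) (hxD : x ≤ D)
    (hxd : x ≤ d₁ + d₂) (hd₁ : 0 ≤ d₁) (hd₁E : d₁ ≤ E₁) (hd₂ : 0 ≤ d₂) (hd₂E : d₂ ≤ E₂)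
    (hE₁ : E₁ ≤ D + d₂) (hE₂ : E₂ ≤ D + d₁) :
    x / D ≤ 2 * (d₁ / E₁) + 2 * (d₂ / E₂) := by
  by_cases hsmall : 2 * d₁ ≤ E₁ ∧ 2 * d₂ ≤ E₂
  · have hdiv : ∀ d E : ℝ, 0 ≤ d → d ≤ E → E ≤ 2 * D → d / D ≤ 2 * (d / E) := by
      intro d E hd hdE hED
      rcases (hd.trans hdE).lt_or_eq with hE | hE
      · calc d / D ≤ d / (E / 2) := div_le_div_of_nonneg_left hd (by positivity) (by linarith)
          _ = 2 * (d / E) := by ring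
      · obtain rfl : d = 0 := by linarith
        simp
    calc x / D ≤ (d₁ + d₂) / D := by gcongr; linarith
      _ = d₁ / D + d₂ / D := add_div _ _ _
      _ ≤ 2 * (d₁ / E₁) + 2 * (d₂ / E₂) :=
        add_le_add (hdiv _ _ hd₁ hd₁E (by linarith)) (hdiv _ _ hd₂ hd₂E (by linarith))
  · have hlarge : ∀ d E : ℝ, 0 ≤ d → d ≤ E → E < 2 * d → 1 ≤ 2 * (d / E) := by
      intro d E hd hdE hEd
      rw [← mul_div_assoc, le_div_iff₀ (by linarith)]
      linarith
    have hxD1 : x / D ≤ 1 := div_le_one_of_le₀ hxD (hx.trans hxD)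
    rw [not_and_or, not_le, not_le] at hsmall
    rcases hsmall with h | h
    · have := hlarge _ _ hd₁ hd₁E h
      have : 0 ≤ d₂ / E₂ := div_nonneg hd₂ (hd₂.trans hd₂E)
      linarith
    · have := hlarge _ _ hd₂ hd₂E h
      have : 0 ≤ d₁ / E₁ := div_nonneg hd₁ (hd₁.trans hd₁E)
      linarith

theorem disc_le_two_mul_add_two_mul (μ : Measure X) [IsFiniteMeasure μ] (A B C : Set X) :
    disc μ A C ≤ 2 * disc μ A B + 2 * disc μ B C := by
  simp only [disc_eq_measureReal_div]
  have hΔ : ∀ S T : Set X, μ.real (symmDiff S T) ≤ μ.real (S ∪ T) := fun S T =>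
    measureReal_mono Set.symmDiff_subset_union
  refine div_le_two_mul_div_add_two_mul_div measureReal_nonneg (hΔ A C)
    ((measureReal_mono (symmDiff_triangle A B C)).trans (measureReal_union_le _ _))
    measureReal_nonneg (hΔ A B) measureReal_nonneg (hΔ B C) ?_ ?_
  · refine (measureReal_mono fun x hx => ?_).trans (measureReal_union_le (A ∪ C) (symmDiff B C))
    simp only [Set.mem_union, Set.mem_symmDiff] at hx ⊢
    tauto
  · refine (measureReal_mono fun x hx => ?_).trans (measureReal_union_le (A ∪ C) (symmDiff A B))
    simp only [Set.mem_union, Set.mem_symmDiff] at hx ⊢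
    tauto

theorem Measurable.integrable_disc {Y : Type*} [MeasurableSpace Y] {m : Measure Y}
    [IsFiniteMeasure m] {μ : Measure X} {S T : Y → Set X}
    (h : Measurable fun y => disc μ (S y) (T y)) : Integrable (fun y => disc μ (S y) (T y)) m :=
  .of_bound h.aestronglyMeasurable 1 <| .of_forall fun y => by
    rw [Real.norm_of_nonneg (disc_nonneg _ _ _)]
    exact disc_le_one _ _ _

namespace Comparable

variable {ζ : ℝ} {μ ν : Measure X}

theorem symm (h : Comparable ζ μ ν) : Comparable ζ ν μ := fun S hS => (h S hS).symm

theorem le_smul (h : Comparable ζ μ ν) : μ ≤ ENNReal.ofReal (exp ζ) • ν :=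
  Measure.le_iff.2 fun S hS => (h S hS).1

theorem of_le_smul (h₁ : μ ≤ ENNReal.ofReal (exp ζ) • ν) (h₂ : ν ≤ ENNReal.ofReal (exp ζ) • μ) :
    Comparable ζ μ ν :=
  fun S _ => ⟨h₁ S, h₂ S⟩

theorem measureReal_le [IsFiniteMeasure ν] (h : Comparable ζ μ ν) {S : Set X}
    (hS : MeasurableSet S) : μ.real S ≤ exp ζ * ν.real S := by
  simpa [Measure.real, ENNReal.toReal_mul, exp_nonneg] using
    ENNReal.toReal_mono (by finiteness) (h S hS).1

theorem restrict (h : Comparable ζ μ ν) (s : Set X) :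
    Comparable ζ (μ.restrict s) (ν.restrict s) :=
  .of_le_smul (by simpa using Measure.restrict_mono subset_rfl h.le_smul)
    (by simpa using Measure.restrict_mono subset_rfl h.symm.le_smul)

theorem prod [SFinite μ] [SFinite ν] (h : Comparable ζ μ ν) :
    Comparable (2 * ζ) (μ.prod μ) (ν.prod ν) := by
  have hc : ENNReal.ofReal (exp (2 * ζ)) = ENNReal.ofReal (exp ζ) * ENNReal.ofReal (exp ζ) := by
    rw [two_mul, exp_add, ENNReal.ofReal_mul (exp_nonneg _)]
  refine .of_le_smul ?_ ?_ <;>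
    rw [hc, mul_smul, ← Measure.prod_smul_left, ← Measure.prod_smul_right]
  exacts [Measure.prod_mono h.le_smul h.le_smul, Measure.prod_mono h.symm.le_smul h.symm.le_smul]

theorem integral_le (h : Comparable ζ μ ν) {g : X → ℝ} (hg₀ : 0 ≤ g) (hg : Integrable g ν) :
    ∫ x, g x ∂μ ≤ exp ζ * ∫ x, g x ∂ν := by
  calc ∫ x, g x ∂μ ≤ ∫ x, g x ∂(ENNReal.ofReal (exp ζ) • ν) :=
        integral_mono_measure h.le_smul (.of_forall hg₀) (hg.smul_measure ENNReal.ofReal_ne_top)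
    _ = exp ζ * ∫ x, g x ∂ν := by
        rw [integral_smul_measure, ENNReal.toReal_ofReal (exp_nonneg ζ), smul_eq_mul]

theorem disc_le [IsFiniteMeasure μ] [IsFiniteMeasure ν] (h : Comparable ζ μ ν) {B C : Set X}
    (hB : MeasurableSet B) (hC : MeasurableSet C) :
    disc μ B C ≤ exp (2 * ζ) * disc ν B C := by
  simp only [disc_eq_measureReal_div]
  have hΔ := h.measureReal_le (hB.symmDiff hC)
  have hU := h.symm.measureReal_le (hB.union hC)
  rcases (measureReal_nonneg : 0 ≤ ν.real (B ∪ C)).lt_or_eq with hν | hν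
  · calc μ.real (symmDiff B C) / μ.real (B ∪ C)
        ≤ exp ζ * ν.real (symmDiff B C) / (ν.real (B ∪ C) / exp ζ) :=
          div_le_div₀ (by positivity) hΔ (by positivity)
            ((div_le_iff₀ (exp_pos ζ)).2 (by linarith))
      _ = exp (2 * ζ) * (ν.real (symmDiff B C) / ν.real (B ∪ C)) := by
          rw [two_mul, exp_add]
          field_simp
  · have hμ : μ.real (B ∪ C) = 0 :=
      le_antisymm (by simpa [← hν] using h.measureReal_le (hB.union hC)) measureReal_nonneg
    simp [hμ, ← hν]

end Comparable

theorem integral_disc_le_of_comparable {ζ : ℝ} {μ ν : Measure X} [IsFiniteMeasure μ]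
    [IsFiniteMeasure ν] (h : Comparable ζ μ ν) {Y : Type*} [MeasurableSpace Y] (m : Measure Y)
    [IsFiniteMeasure m] {A B C : Y → Set X} (hB : ∀ y, MeasurableSet (B y))
    (hC : ∀ y, MeasurableSet (C y)) (hAB : Measurable fun y => disc μ (A y) (B y))
    (hBC : Measurable fun y => disc ν (B y) (C y)) :
    ∫ y, disc μ (A y) (C y) ∂m ≤
      2 * ∫ y, disc μ (A y) (B y) ∂m + 2 * exp (2 * ζ) * ∫ y, disc ν (B y) (C y) ∂m := by
  have hpoint : ∀ y, disc μ (A y) (C y) ≤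
      2 * disc μ (A y) (B y) + 2 * exp (2 * ζ) * disc ν (B y) (C y) := fun y => by
    have := h.disc_le (hB y) (hC y)
    linarith [disc_le_two_mul_add_two_mul μ (A y) (B y) (C y)]
  have hAB_int := (hAB.integrable_disc (m := m)).const_mul 2
  have hBC_int := (hBC.integrable_disc (m := m)).const_mul (2 * exp (2 * ζ))
  calc ∫ y, disc μ (A y) (C y) ∂m
      ≤ ∫ y, (2 * disc μ (A y) (B y) + 2 * exp (2 * ζ) * disc ν (B y) (C y)) ∂m :=
        integral_mono_of_nonneg (.of_forall fun y => disc_nonneg _ _ _) (hAB_int.add hBC_int)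
          (.of_forall hpoint)
    _ = _ := by rw [integral_add hAB_int hBC_int, integral_const_mul, integral_const_mul]

theorem ScalingType.le_rpow_mul {f : ℝ → ℝ} {σ : ℝ} (hf : ScalingType f σ) {a x y : ℝ}
    (ha : 1 ≤ a) (hx : 0 ≤ x) (hy : 0 ≤ y) (hyx : y ≤ a * x) : f y ≤ a ^ σ * f x :=
  (hf.2.1 hy (mul_nonneg (zero_le_one.trans ha) hx) hyx).trans (hf.2.2 a ha x hx)

theorem ScalingType.one_div_le_rpow_mul_one_div {f : ℝ → ℝ} {σ : ℝ} (hf : ScalingType f σ)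
    (hfpos : ∀ x > (0 : ℝ), 0 < f x) {a x y : ℝ} (ha : 1 ≤ a) (hx : 0 < x) (hy : 0 < y)
    (hyx : y ≤ a * x) : 1 / f x ≤ a ^ σ * (1 / f y) := by
  rw [mul_one_div, div_le_div_iff₀ (hfpos x hx) (hfpos y hy), one_mul]
  exact hf.le_rpow_mul ha hx.le hy.le hyx

end

theorem causal_distance_transitivity_estimate_general {X : Type*} [MeasurableSpace X]
    (ζ σ : ℝ) (hζ : 0 ≤ ζ)
    (μ ν : Measure X) [IsFiniteMeasure μ] [IsFiniteMeasure ν]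
    (hcomp : Comparable ζ μ ν)
    (W : Set X) (hW : MeasurableSet W) (hμW : 0 < μ W) (hνW : 0 < ν W)
    (f : ℝ → ℝ) (hf : ScalingType f σ) (hfpos : ∀ x > (0 : ℝ), 0 < f x)
    (A B C : X → X → Set X)
    (hB : ∀ p q, MeasurableSet (B p q))
    (hC : ∀ p q, MeasurableSet (C p q))
    (hm1 : Measurable fun pq : X × X => disc μ (A pq.1 pq.2) (B pq.1 pq.2))
    (hm2 : Measurable fun pq : X × X => disc ν (B pq.1 pq.2) (C pq.1 pq.2)) :
    (1 / f (μ W).toReal) *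
        ∫ pq in W ×ˢ W, disc μ (A pq.1 pq.2) (C pq.1 pq.2) ∂(μ.prod μ) ≤
      2 * ((1 / f (μ W).toReal) *
          ∫ pq in W ×ˢ W, disc μ (A pq.1 pq.2) (B pq.1 pq.2) ∂(μ.prod μ)) +
        2 * Real.exp ((4 + σ) * ζ) *
          ((1 / f (ν W).toReal) *
            ∫ pq in W ×ˢ W, disc ν (B pq.1 pq.2) (C pq.1 pq.2) ∂(ν.prod ν)) := by
  have htri := integral_disc_le_of_comparable hcomp ((μ.prod μ).restrict (W ×ˢ W))
    (fun pq => hB pq.1 pq.2) (fun pq => hC pq.1 pq.2) hm1 hm2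
  have hchange := (hcomp.prod.restrict (W ×ˢ W)).integral_le (fun _ => disc_nonneg _ _ _)
    hm2.integrable_disc
  have hμW' : 0 < (μ W).toReal := ENNReal.toReal_pos hμW.ne' (measure_ne_top μ W)
  have hνW' : 0 < (ν W).toReal := ENNReal.toReal_pos hνW.ne' (measure_ne_top ν W)
  have hnorm := hf.one_div_le_rpow_mul_one_div hfpos (one_le_exp hζ) hμW' hνW'
    (hcomp.symm.measureReal_le hW)
  rw [← exp_mul] at hnorm
  set c₁ := 1 / f (μ W).toReal
  have hc₁ : 0 ≤ c₁ := one_div_nonneg.2 (hfpos _ hμW').le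
  set I₁ := ∫ pq in W ×ˢ W, disc μ (A pq.1 pq.2) (B pq.1 pq.2) ∂(μ.prod μ)
  set I₂ := ∫ pq in W ×ˢ W, disc ν (B pq.1 pq.2) (C pq.1 pq.2) ∂(ν.prod ν)
  have hI₂ : 0 ≤ I₂ := integral_nonneg fun _ => disc_nonneg _ _ _
  calc _ ≤ c₁ * (2 * I₁ + 2 * exp (2 * ζ) * (exp (2 * ζ) * I₂)) :=
        mul_le_mul_of_nonneg_left (htri.trans (by gcongr)) hc₁
    _ = 2 * (c₁ * I₁) + 2 * exp (2 * ζ) * exp (2 * ζ) * (c₁ * I₂) := by ring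
    _ ≤ 2 * (c₁ * I₁) +
          2 * exp (2 * ζ) * exp (2 * ζ) * (exp (ζ * σ) * (1 / f (ν W).toReal) * I₂) := by
        gcongr
    _ = _ := by
        rw [show (4 + σ) * ζ = 2 * ζ + 2 * ζ + ζ * σ by ring, exp_add, exp_add]
        ring

theorem causal_distance_transitivity_estimate {X : Type*} [MeasurableSpace X]
    (ζ σ : ℝ) (hζ : 0 ≤ ζ) (hσ : 1 ≤ σ)
    (μ ν : Measure X) [IsFiniteMeasure μ] [IsFiniteMeasure ν]
    (hcomp : Comparable ζ μ ν)
    (W : Set X) (hW : MeasurableSet W) (hμW : 0 < μ W) (hνW : 0 < ν W)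
    (f : ℝ → ℝ) (hf : ScalingType f σ) (hfpos : ∀ x > (0 : ℝ), 0 < f x)
    (A B C : X → X → Set X)
    (hA : ∀ p q, MeasurableSet (A p q)) (hB : ∀ p q, MeasurableSet (B p q))
    (hC : ∀ p q, MeasurableSet (C p q))
    (hm1 : Measurable fun pq : X × X => disc μ (A pq.1 pq.2) (B pq.1 pq.2))
    (hm2 : Measurable fun pq : X × X => disc ν (B pq.1 pq.2) (C pq.1 pq.2))
    (hm3 : Measurable fun pq : X × X => disc μ (A pq.1 pq.2) (C pq.1 pq.2)) :
    (1 / f (μ W).toReal) *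
        ∫ pq in W ×ˢ W, disc μ (A pq.1 pq.2) (C pq.1 pq.2) ∂(μ.prod μ) ≤
      2 * ((1 / f (μ W).toReal) *
          ∫ pq in W ×ˢ W, disc μ (A pq.1 pq.2) (B pq.1 pq.2) ∂(μ.prod μ)) +
        2 * Real.exp ((4 + σ) * ζ) *
          ((1 / f (ν W).toReal) *
            ∫ pq in W ×ˢ W, disc ν (B pq.1 pq.2) (C pq.1 pq.2) ∂(ν.prod ν)) :=
  causal_distance_transitivity_estimate_general ζ σ hζ μ ν hcomp W hW hμW hνW f hf hfpos A B C hB hC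
    hm1 hm2
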